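/- Let p_ent : outcomes → [0,1] be a probability distribution with max value p* ≤ 1/d, and let p_sep(a) = (1/(1+D))(p_ent(a) + 1/d) with D = d^{N-1}. If q ≥ (1+D)(1-L)/((1+D)(1-L)+L) with L ∈ (0,1], then for every outcome a the quantity γ_a = (1-L)(1-q)(p* - p_ent(a))/(q·L·p_sep(a)) lies in [0,1]. -/

import Mathlib

/-- If `q ≥ (1+D)(1-L)/((1+D)(1-L)+L)`, then Eve's mixing parameters
`γ_a = (1-L)(1-q)(p* - p_ent(a))/(q·L·p_sep(a))` all lie in `[0,1]`. -/
theorem mixing_parameter_in_unit_interval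
    {A : Type*} [Fintype A] [Nonempty A]
    (d N : ℕ) (hd : 2 ≤ d) (hN : 2 ≤ N)
    (L q pstar : ℝ) (hL0 : 0 < L) (hL1 : L ≤ 1) (hq0 : 0 < q) (hq1 : q ≤ 1)
    (p_ent : A → ℝ) (hpos : ∀ a, 0 ≤ p_ent a) (hsum : ∑ a, p_ent a = 1)
    (hstar : ∀ a, p_ent a ≤ pstar) (hstar' : ∃ a, p_ent a = pstar)
    (hstard : pstar ≤ 1 / (d : ℝ))
    (p_sep : A → ℝ)
    (hsep : ∀ a, p_sep a = (p_ent a + 1 / (d : ℝ)) / (1 + (d : ℝ) ^ (N - 1)))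
    (hq : ((1 + (d : ℝ) ^ (N - 1)) * (1 - L)) /
        ((1 + (d : ℝ) ^ (N - 1)) * (1 - L) + L) ≤ q) :
    ∀ a, 0 ≤ (1 - L) * (1 - q) * (pstar - p_ent a) / (q * L * p_sep a) ∧
      (1 - L) * (1 - q) * (pstar - p_ent a) / (q * L * p_sep a) ≤ 1 := by
  intro a
  have hdpos : (0:ℝ) < d := by positivity
  have hd1 : (1:ℝ) ≤ (d:ℝ) := by exact_mod_cast Nat.one_le_of_lt hd
  set D : ℝ := (d : ℝ) ^ (N - 1) with hDdef
  have hD : (1:ℝ) ≤ D := one_le_pow₀ hd1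
  have hD0 : (0:ℝ) < 1 + D := by linarith
  have hinvd : (0:ℝ) < 1 / d := by positivity
  have hsep_pos : 0 < p_sep a := by
    rw [hsep a]
    have := hpos a
    positivity
  have hden : 0 < q * L * p_sep a := by positivity
  have hnum : 0 ≤ (1 - L) * (1 - q) * (pstar - p_ent a) := by
    have h1 := hstar a
    have : 0 ≤ pstar - p_ent a := by linarith
    have h2 : 0 ≤ 1 - L := by linarith
    have h3 : 0 ≤ 1 - q := by linarith
    positivity
  refine ⟨div_nonneg hnum hden.le, ?_⟩
  rw [div_le_one hden]
  -- key inequality from hq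
  have hdenq : 0 < (1 + D) * (1 - L) + L := by nlinarith
  have hkey : (1 - q) * ((1 + D) * (1 - L)) ≤ q * L := by
    rw [div_le_iff₀ hdenq] at hq
    nlinarith
  have hsepeq : p_sep a * (1 + D) = p_ent a + 1 / d := by
    rw [hsep a]; field_simp
  have h1 := hstar a
  have h2 := hpos a
  have h3 : 0 ≤ 1 - L := by linarith
  have h4 : 0 ≤ 1 - q := by linarith
  nlinarith [mul_nonneg h3 h4, hsep_pos.le, mul_nonneg (mul_nonneg h3 h4) h2]
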